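/- arXiv:1810.06708 — 2 statements merged into one kernel-verified Lean document; each statement's English description precedes it below -/
import Mathlib

section
/- If f, g : R → R are (1/q)-Lipschitz and 0 < δ ≤ 1 with δ ∈ q^ℤ, then the intersection V_δ(f) ∩ H_δ(g) of the vertical δ-neighborhood of f and the horizontal δ-neighborhood of g is exactly the ball of radius δ centered at the unique intersection point of the curves V(f) and H(g). -/
open scoped Classical
open MeasureTheory Filter

noncomputable section

/-- A complete, locally compact non-Archimedean field with residue field of
order `q`, absolute value normalized so that a uniformizer has norm `1/q`.
`reps` is a set of `q` coset representatives for the residue field: they cover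
the ring of integers by discs of radius `1/q` and are pairwise at distance
`> 1/q`. -/
structure NAField (K : Type*) [NormedField K] where
  na : IsNonarchimedean (fun x : K => ‖x‖)
  complete : CompleteSpace K
  locCompact : LocallyCompactSpace K
  q : ℕ
  one_lt_q : 1 < q
  valGroup : ∀ x : K, x ≠ 0 → ∃ n : ℤ, ‖x‖ = (q : ℝ) ^ n
  exists_unif : ∃ ϖ : K, ‖ϖ‖ = (q : ℝ)⁻¹
  reps : Finset K
  card_reps : reps.card = q
  norm_reps : ∀ s ∈ reps, ‖s‖ ≤ 1
  reps_cover : ∀ x : K, ‖x‖ ≤ 1 → ∃ s ∈ reps, ‖x - s‖ ≤ (q : ℝ)⁻¹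
  reps_sep : ∀ s ∈ reps, ∀ t ∈ reps, s ≠ t → (q : ℝ)⁻¹ < ‖s - t‖

variable {K : Type*} [NormedField K]

/-- `f : R → R` is `(1/q)`-Lipschitz on the ring of integers. -/
def NAField.IsLip (F : NAField K) (f : K → K) : Prop :=
  (∀ t : K, ‖t‖ ≤ 1 → ‖f t‖ ≤ 1) ∧
  ∀ t₁ t₂ : K, ‖t₁‖ ≤ 1 → ‖t₂‖ ≤ 1 → ‖f t₁ - f t₂‖ ≤ ((F.q : ℝ))⁻¹ * ‖t₁ - t₂‖

/-- The unit polydisc `R² ⊆ K²`. -/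
def unitPoly (K : Type*) [NormedField K] : Set (K × K) := {p | ‖p.1‖ ≤ 1 ∧ ‖p.2‖ ≤ 1}

/-- Horizontal `δ`-neighborhood `H_δ(f) = {(t, f t + θ) : t ∈ R, |θ| ≤ δ}`. -/
def Hnbhd (f : K → K) (δ : ℝ) : Set (K × K) :=
  {p | ∃ t θ : K, ‖t‖ ≤ 1 ∧ ‖θ‖ ≤ δ ∧ p = (t, f t + θ)}

/-- Vertical `δ`-neighborhood `V_δ(f) = {(f t + θ, t) : t ∈ R, |θ| ≤ δ}`. -/
def Vnbhd (f : K → K) (δ : ℝ) : Set (K × K) :=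
  {p | ∃ t θ : K, ‖t‖ ≤ 1 ∧ ‖θ‖ ≤ δ ∧ p = (f t + θ, t)}

/-- The automorphism `T(x,y) = (a y + b (x^q - x), x)`. -/
def NAField.Tmap (F : NAField K) (a b : K) : K × K → K × K :=
  fun p => (a * p.2 + b * (p.1 ^ F.q - p.1), p.1)

/-- The inverse automorphism `T⁻¹(x,y) = (y, a⁻¹ (x - b (y^q - y)))`. -/
def NAField.Tinv (F : NAField K) (a b : K) : K × K → K × K :=
  fun p => (p.2, a⁻¹ * (p.1 - b * (p.2 ^ F.q - p.2)))

/-- The attractor `A_T = ⋂_{n ≥ 1} Tⁿ(R²)`. -/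
def NAField.Attractor (F : NAField K) (a b : K) : Set (K × K) :=
  ⋂ n ∈ {n : ℕ | 1 ≤ n}, (F.Tmap a b)^[n] '' unitPoly K

/-- The basin of attraction `B_T = ⋃_{n ≥ 1} T⁻ⁿ(R²)`. -/
def NAField.Basin (F : NAField K) (a b : K) : Set (K × K) :=
  ⋃ n ∈ {n : ℕ | 1 ≤ n}, (F.Tmap a b)^[n] ⁻¹' unitPoly K

/-- `T^k` for `k : ℤ`. -/
def NAField.iterZ (F : NAField K) (a b : K) (k : ℤ) : K × K → K × K :=
  if 0 ≤ k then (F.Tmap a b)^[k.toNat] else (F.Tinv a b)^[(-k).toNat]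

/-- The image under the conjugacy `ω` of the cylinder set of bisequences
agreeing with `s` on coordinates `-M, …, M`: points of the attractor whose
itinerary through the residue strips matches `s` on those coordinates. -/
def NAField.Cyl (F : NAField K) (a b : K) (s : ℤ → K) (M : ℕ) : Set (K × K) :=
  {p | p ∈ F.Attractor a b ∧
    ∀ k : ℤ, |k| ≤ (M : ℤ) → ‖(F.iterZ a b k p).1 - s k‖ ≤ ((F.q : ℝ))⁻¹}

/-!
The map `L (x, y) = (f y, g x)` is a `q⁻¹`-contraction of the unit polydisc `R²`; its fixed point
`p₀ = (x₀, y₀)` is the intersection point of the curves, and `V_δ(f) ∩ H_δ(g)` is the set of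
`p ∈ R²` with `dist p (L p) ≤ δ`. In an ultrametric space `dist (L p) p₀ ≤ q⁻¹ dist p p₀` forces
`dist p (L p) = dist p p₀`, so this set is the `δ`-ball about `p₀`, which lies in `R²` as `δ ≤ 1`.
-/
open Metric Set Function
open scoped NNReal

instance Prod.isUltrametricDist {X Y : Type*} [PseudoMetricSpace X] [PseudoMetricSpace Y]
    [IsUltrametricDist X] [IsUltrametricDist Y] : IsUltrametricDist (X × Y) where
  dist_triangle_max x y z := by
    simp only [Prod.dist_eq]
    refine max_le ((dist_triangle_max _ y.1 _).trans ?_) ((dist_triangle_max _ y.2 _).trans ?_) <;>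
      exact max_le_max (by simp) (by simp)

theorem LipschitzOnWith.exists_isFixedPt {X : Type*} [MetricSpace X] {L : X → X} {s : Set X}
    {c : ℝ≥0} (hL : LipschitzOnWith c L s) (hc : c < 1) (hs : IsComplete s) (hsL : MapsTo L s s)
    (hne : s.Nonempty) : ∃ p ∈ s, IsFixedPt L p :=
  let ⟨p, hp, hfix, _⟩ := ContractingWith.exists_fixedPoint' hs hsL
    ⟨hc, fun a b => hL a.2 b.2⟩ hne.some_mem (edist_ne_top _ _)
  ⟨p, hp, hfix⟩

theorem IsUltrametricDist.dist_self_map_eq_dist_of_isFixedPt {X : Type*} [PseudoMetricSpace X]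
    [IsUltrametricDist X] {L : X → X} {s : Set X} {c : ℝ≥0} (hL : LipschitzOnWith c L s)
    (hc : c < 1) {p₀ p : X} (hp₀ : p₀ ∈ s) (hfix : IsFixedPt L p₀) (hp : p ∈ s) :
    dist p (L p) = dist p p₀ := by
  have hLp : dist (L p) p₀ ≤ c * dist p p₀ := by
    simpa only [hfix.eq] using hL.dist_le_mul p hp p₀ hp₀
  have hc' : (c : ℝ) < 1 := hc
  have hd := dist_nonneg (x := p) (y := p₀)
  apply le_antisymm
  · refine (dist_triangle_max p p₀ (L p)).trans (max_le le_rfl ?_)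
    rw [dist_comm]
    exact hLp.trans (mul_le_of_le_one_left hd hc'.le)
  · rcases le_max_iff.mp (dist_triangle_max p (L p) p₀) with h | h
    · exact h
    · nlinarith [dist_nonneg (x := p) (y := L p)]

theorem IsUltrametricDist.setOf_dist_self_map_le_eq_closedBall {X : Type*} [PseudoMetricSpace X]
    [IsUltrametricDist X] {L : X → X} {c : ℝ≥0} {x p₀ : X} {r δ : ℝ}
    (hL : LipschitzOnWith c L (closedBall x r)) (hc : c < 1) (hp₀ : p₀ ∈ closedBall x r)
    (hfix : IsFixedPt L p₀) (hδr : δ ≤ r) :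
    {p ∈ closedBall x r | dist p (L p) ≤ δ} = closedBall p₀ δ := by
  have hsub : closedBall p₀ δ ⊆ closedBall x r :=
    (closedBall_subset_closedBall hδr).trans (closedBall_eq_of_mem hp₀).symm.subset
  ext p
  refine ⟨fun ⟨hp, hpδ⟩ => ?_, fun hp => ⟨hsub hp, ?_⟩⟩
  · rwa [mem_closedBall, ← dist_self_map_eq_dist_of_isFixedPt hL hc hp₀ hfix hp]
  · rwa [dist_self_map_eq_dist_of_isFixedPt hL hc hp₀ hfix (hsub hp)]

namespace NAField

theorem isUltrametricDist (F : NAField K) : IsUltrametricDist K :=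
  IsUltrametricDist.isUltrametricDist_of_isNonarchimedean_norm F.na

theorem inv_q_lt_one (F : NAField K) : (F.q : ℝ≥0)⁻¹ < 1 :=
  inv_lt_one_of_one_lt₀ (by exact_mod_cast F.one_lt_q)

variable {F : NAField K} {f g : K → K}

theorem IsLip.mapsTo (hf : F.IsLip f) : MapsTo f (closedBall 0 1) (closedBall 0 1) :=
  fun t ht => mem_closedBall_zero_iff.2 (hf.1 t (mem_closedBall_zero_iff.1 ht))

theorem IsLip.lipschitzOnWith (hf : F.IsLip f) :
    LipschitzOnWith (F.q : ℝ≥0)⁻¹ f (closedBall 0 1) :=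
  LipschitzOnWith.of_dist_le_mul fun s hs t ht => by
    simpa only [dist_eq_norm, NNReal.coe_inv, NNReal.coe_natCast] using
      hf.2 s t (mem_closedBall_zero_iff.1 hs) (mem_closedBall_zero_iff.1 ht)

theorem IsLip.mapsTo_prodMk_swap (hf : F.IsLip f) (hg : F.IsLip g) :
    MapsTo (fun p : K × K => (f p.2, g p.1)) (closedBall 0 1) (closedBall 0 1) := by
  rw [← Prod.mk_zero_zero, ← closedBall_prod_same]
  exact fun p hp => ⟨hf.mapsTo hp.2, hg.mapsTo hp.1⟩

theorem IsLip.lipschitzOnWith_prodMk_swap (hf : F.IsLip f) (hg : F.IsLip g) :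
    LipschitzOnWith (F.q : ℝ≥0)⁻¹ (fun p : K × K => (f p.2, g p.1)) (closedBall 0 1) := by
  rw [← Prod.mk_zero_zero, ← closedBall_prod_same]
  exact LipschitzOnWith.of_dist_le_mul fun p hp p' hp' => by
    simp only [Prod.dist_eq, NNReal.coe_inv, NNReal.coe_natCast]
    rw [max_comm (dist p.1 p'.1), mul_max_of_nonneg _ _ (by positivity)]
    exact max_le_max (hf.lipschitzOnWith.dist_le_mul _ hp.2 _ hp'.2)
      (hg.lipschitzOnWith.dist_le_mul _ hp.1 _ hp'.1)

end NAField

theorem mem_Vnbhd_iff {f : K → K} {δ : ℝ} {p : K × K} :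
    p ∈ Vnbhd f δ ↔ p.2 ∈ closedBall 0 1 ∧ dist p.1 (f p.2) ≤ δ := by
  rw [mem_closedBall_zero_iff, dist_eq_norm]
  constructor
  · rintro ⟨t, θ, ht, hθ, rfl⟩
    simpa using ⟨ht, hθ⟩
  · exact fun ⟨hp, hpδ⟩ => ⟨p.2, p.1 - f p.2, hp, hpδ, by simp⟩

theorem mem_Hnbhd_iff {g : K → K} {δ : ℝ} {p : K × K} :
    p ∈ Hnbhd g δ ↔ p.1 ∈ closedBall 0 1 ∧ dist p.2 (g p.1) ≤ δ := by
  rw [mem_closedBall_zero_iff, dist_eq_norm]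
  constructor
  · rintro ⟨t, θ, ht, hθ, rfl⟩
    simpa using ⟨ht, hθ⟩
  · exact fun ⟨hp, hpδ⟩ => ⟨p.1, p.2 - g p.1, hp, hpδ, by simp⟩

theorem Vnbhd_inter_Hnbhd (f g : K → K) (δ : ℝ) :
    Vnbhd f δ ∩ Hnbhd g δ = {p ∈ closedBall (0 : K × K) 1 | dist p (f p.2, g p.1) ≤ δ} := by
  ext p
  rw [← Prod.mk_zero_zero, ← closedBall_prod_same]
  simp only [mem_inter_iff, mem_Vnbhd_iff, mem_Hnbhd_iff, mem_ofPred_eq, mem_prod, Prod.dist_eq,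
    max_le_iff]
  tauto

theorem stmt3 (F : NAField K) (f g : K → K) (hf : F.IsLip f) (hg : F.IsLip g)
    (r : ℕ) (δ : ℝ) (hδ : δ = ((F.q : ℝ))⁻¹ ^ r) :
    ∃ x₀ y₀ : K, ‖x₀‖ ≤ 1 ∧ ‖y₀‖ ≤ 1 ∧ x₀ = f y₀ ∧ y₀ = g x₀ ∧
      Vnbhd f δ ∩ Hnbhd g δ = {p : K × K | max ‖p.1 - x₀‖ ‖p.2 - y₀‖ ≤ δ} := by
  have := F.complete
  have := F.isUltrametricDist
  have hL := hf.lipschitzOnWith_prodMk_swap hg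
  obtain ⟨⟨x₀, y₀⟩, hp₀, hfix⟩ := hL.exists_isFixedPt F.inv_q_lt_one
    isClosed_closedBall.isComplete (hf.mapsTo_prodMk_swap hg) (nonempty_closedBall.2 zero_le_one)
  obtain ⟨hx₀, hy₀⟩ : ‖x₀‖ ≤ 1 ∧ ‖y₀‖ ≤ 1 := by
    simpa only [mem_closedBall_zero_iff, Prod.norm_def, max_le_iff] using hp₀
  obtain ⟨hfy₀, hgx₀⟩ := Prod.mk.inj hfix
  have hδ1 : δ ≤ 1 := hδ ▸ pow_le_one₀ (by positivity)
    (inv_le_one_of_one_le₀ (by exact_mod_cast F.one_lt_q.le))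
  refine ⟨x₀, y₀, hx₀, hy₀, hfy₀.symm, hgx₀.symm, ?_⟩
  rw [Vnbhd_inter_Hnbhd, IsUltrametricDist.setOf_dist_self_map_le_eq_closedBall hL
    F.inv_q_lt_one hp₀ hfix hδ1]
  ext p
  simp only [mem_closedBall, dist_eq_norm, Prod.norm_def, Prod.fst_sub, Prod.snd_sub, mem_ofPred_eq]
end
end

section
/- Let φ(t) = b(t^q - t) with |b| = q. If t1, t2 ∈ R satisfy |t1 - t2| ≤ 1/q, then |φ(t1) - φ(t2)| = q·|t1 - t2|; i.e., φ expands distances by exactly the factor q on each residue disc. -/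
open scoped Classical
open MeasureTheory Filter

noncomputable section

variable {K : Type*} [NormedField K]

/-!
Write `φ(t₁) - φ(t₂) = b (S - 1) (t₁ - t₂)` with `S = ∑_{i<q} t₁ⁱ t₂^(q-1-i)`. On a residue disc
`S ≡ q t₂^(q-1) (mod 𝔪)`, and `q ∈ 𝔪` because `q` annihilates the residue field, which has `q`
elements. Hence `|S| < 1`, so `|S - 1| = 1` and `|φ(t₁) - φ(t₂)| = |b| |t₁ - t₂|`.
-/

section Ultrametric

open Finset

variable {R : Type*} [NormedCommRing R] [NormOneClass R] {t s : R}

lemma norm_pow_le_one_of_norm_le_one (ht : ‖t‖ ≤ 1) (n : ℕ) : ‖t ^ n‖ ≤ 1 :=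
  (norm_pow_le t n).trans (pow_le_one₀ (norm_nonneg t) ht)

variable [IsUltrametricDist R]

lemma norm_geom_sum₂_le_one (ht : ‖t‖ ≤ 1) (hs : ‖s‖ ≤ 1) (n : ℕ) :
    ‖∑ i ∈ range n, t ^ i * s ^ (n - 1 - i)‖ ≤ 1 :=
  IsUltrametricDist.norm_sum_le_of_forall_le_of_nonneg zero_le_one fun i _ =>
    (norm_mul_le _ _).trans <| mul_le_one₀ (norm_pow_le_one_of_norm_le_one ht i) (norm_nonneg _)
      (norm_pow_le_one_of_norm_le_one hs _)

lemma norm_pow_sub_pow_le (ht : ‖t‖ ≤ 1) (hs : ‖s‖ ≤ 1) (n : ℕ) :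
    ‖t ^ n - s ^ n‖ ≤ ‖t - s‖ := by
  rw [← geom_sum₂_mul]
  exact (norm_mul_le _ _).trans <|
    mul_le_of_le_one_left (norm_nonneg _) (norm_geom_sum₂_le_one ht hs n)

lemma norm_geom_sum₂_sub_natCast_mul_le (ht : ‖t‖ ≤ 1) (hs : ‖s‖ ≤ 1) (n : ℕ) :
    ‖∑ i ∈ range n, t ^ i * s ^ (n - 1 - i) - n * s ^ (n - 1)‖ ≤ ‖t - s‖ := by
  have hterm : ∀ i ∈ range n, t ^ i * s ^ (n - 1 - i) - s ^ (n - 1)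
      = (t ^ i - s ^ i) * s ^ (n - 1 - i) := by
    intro i hi
    rw [sub_mul, ← pow_add, Nat.add_sub_of_le (Nat.le_sub_one_of_lt (mem_range.1 hi))]
  have hsplit : ∑ i ∈ range n, t ^ i * s ^ (n - 1 - i) - n * s ^ (n - 1)
      = ∑ i ∈ range n, (t ^ i - s ^ i) * s ^ (n - 1 - i) := by
    rw [← sum_congr rfl hterm, sum_sub_distrib, sum_const, card_range, nsmul_eq_mul]
  rw [hsplit]
  exact IsUltrametricDist.norm_sum_le_of_forall_le_of_nonneg (norm_nonneg _) fun i _ =>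
    (norm_mul_le _ _).trans <| (mul_le_of_le_one_right (norm_nonneg _)
      (norm_pow_le_one_of_norm_le_one hs _)).trans (norm_pow_sub_pow_le ht hs i)

end Ultrametric

lemma norm_pow_sub_self_sub_pow_sub_self [IsUltrametricDist K] {n : ℕ} (hn : ‖(n : K)‖ < 1)
    {t s : K} (ht : ‖t‖ ≤ 1) (hs : ‖s‖ ≤ 1) (hts : ‖t - s‖ < 1) :
    ‖(t ^ n - t) - (s ^ n - s)‖ = ‖t - s‖ := by
  set S := ∑ i ∈ Finset.range n, t ^ i * s ^ (n - 1 - i)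
  have hS : ‖S‖ < 1 :=
    calc ‖S‖ = ‖(S - n * s ^ (n - 1)) + n * s ^ (n - 1)‖ := by rw [sub_add_cancel]
      _ ≤ max ‖S - n * s ^ (n - 1)‖ ‖(n : K) * s ^ (n - 1)‖ :=
        IsUltrametricDist.norm_add_le_max _ _
      _ < 1 := max_lt ((norm_geom_sum₂_sub_natCast_mul_le ht hs n).trans_lt hts)
        ((norm_mul_le _ _).trans_lt <| mul_lt_one_of_nonneg_of_lt_one_left (norm_nonneg _) hn
          (norm_pow_le_one_of_norm_le_one hs _))
  have hS_sub_one : ‖S - 1‖ = 1 := by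
    rw [sub_eq_add_neg, IsUltrametricDist.norm_add_eq_max_of_norm_ne_norm (by simpa using hS.ne),
      norm_neg, norm_one, max_eq_right hS.le]
  calc ‖(t ^ n - t) - (s ^ n - s)‖ = ‖(S - 1) * (t - s)‖ := by
        rw [sub_one_mul, geom_sum₂_mul]; ring_nf
    _ = ‖t - s‖ := by rw [norm_mul, hS_sub_one, one_mul]

lemma AddSubgroup.relIndex_closedBall_eq_card {G : Type*} [SeminormedAddCommGroup G]
    [IsUltrametricDist G] {r ρ : ℝ} (hr : 0 < r) (hρ : 0 < ρ) (s : Finset G)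
    (hs : ∀ x ∈ s, ‖x‖ ≤ ρ) (hcover : ∀ x : G, ‖x‖ ≤ ρ → ∃ y ∈ s, ‖x - y‖ ≤ r)
    (hsep : ∀ x ∈ s, ∀ y ∈ s, x ≠ y → r < ‖x - y‖) :
    (IsUltrametricDist.closedBall_openAddSubgroup G hr : AddSubgroup G).relIndex
      (IsUltrametricDist.closedBall_openAddSubgroup G hρ) = s.card := by
  set H := (IsUltrametricDist.closedBall_openAddSubgroup G hr : AddSubgroup G)
  set L := (IsUltrametricDist.closedBall_openAddSubgroup G hρ : AddSubgroup G)
  have hmem : ∀ x : L, x ∈ H.addSubgroupOf L ↔ ‖(x : G)‖ ≤ r := fun x => by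
    simp [H, AddSubgroup.mem_addSubgroupOf, IsUltrametricDist.closedBall_openAddSubgroup]
  have hL : ∀ x, x ∈ L ↔ ‖x‖ ≤ ρ := fun x => by
    simp [L, IsUltrametricDist.closedBall_openAddSubgroup]
  let ψ : s → L ⧸ H.addSubgroupOf L := fun y => QuotientAddGroup.mk ⟨y, (hL y).2 (hs y y.2)⟩
  have hψ : Function.Bijective ψ := by
    refine ⟨fun ⟨x, hx⟩ ⟨y, hy⟩ hxy => ?_, fun z => ?_⟩
    · rw [QuotientAddGroup.eq, hmem] at hxy
      by_contra hne
      refine (hsep x hx y hy fun h => hne (Subtype.ext h)).not_ge ?_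
      simpa [neg_add_eq_sub, norm_sub_rev] using hxy
    · induction z using QuotientAddGroup.induction_on with
      | H x =>
        obtain ⟨y, hy, hxy⟩ := hcover x ((hL x).1 x.2)
        refine ⟨⟨y, hy⟩, ?_⟩
        rw [QuotientAddGroup.eq, hmem]
        simpa [neg_add_eq_sub] using hxy
  rw [AddSubgroup.relIndex, AddSubgroup.index, ← Nat.card_eq_of_bijective ψ hψ,
    Nat.card_eq_fintype_card, Fintype.card_coe]

lemma NAField.isUltrametricDist_s5 (F : NAField K) : IsUltrametricDist K :=
  IsUltrametricDist.isUltrametricDist_of_isNonarchimedean_norm F.na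

lemma NAField.inv_q_pos (F : NAField K) : (0 : ℝ) < (F.q : ℝ)⁻¹ :=
  inv_pos.2 (Nat.cast_pos.2 (Nat.zero_lt_of_lt F.one_lt_q))

lemma NAField.inv_q_lt_one_s5 (F : NAField K) : (F.q : ℝ)⁻¹ < 1 :=
  inv_lt_one_of_one_lt₀ (Nat.one_lt_cast.2 F.one_lt_q)

/-- The residue ring `R / 𝔪` is an additive group of order `q`, so `q • 1 ∈ 𝔪`. -/
lemma NAField.norm_natCast_q_le (F : NAField K) : ‖(F.q : K)‖ ≤ (F.q : ℝ)⁻¹ := by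
  have := F.isUltrametricDist_s5
  have hindex := AddSubgroup.relIndex_closedBall_eq_card F.inv_q_pos one_pos F.reps F.norm_reps
    F.reps_cover F.reps_sep
  have hone :
      (1 : K) ∈ (IsUltrametricDist.closedBall_openAddSubgroup K one_pos : AddSubgroup K) := by
    simp [IsUltrametricDist.closedBall_openAddSubgroup]
  have hmem :=
    (IsUltrametricDist.closedBall_openAddSubgroup K F.inv_q_pos : AddSubgroup K).nsmul_relIndex_mem
      hone
  rw [hindex, F.card_reps] at hmem
  simpa [IsUltrametricDist.closedBall_openAddSubgroup] using hmem

theorem stmt5 (F : NAField K) (b : K) (hb : ‖b‖ = (F.q : ℝ))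
    (t₁ t₂ : K) (h₁ : ‖t₁‖ ≤ 1) (h₂ : ‖t₂‖ ≤ 1)
    (h : ‖t₁ - t₂‖ ≤ ((F.q : ℝ))⁻¹) :
    ‖b * (t₁ ^ F.q - t₁) - b * (t₂ ^ F.q - t₂)‖ = (F.q : ℝ) * ‖t₁ - t₂‖ := by
  have := F.isUltrametricDist_s5
  rw [← mul_sub, norm_mul, hb, norm_pow_sub_self_sub_pow_sub_self
    (F.norm_natCast_q_le.trans_lt F.inv_q_lt_one_s5) h₁ h₂ (h.trans_lt F.inv_q_lt_one_s5)]
end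
end
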